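/- arXiv:1909.03780 — 3 statements merged into one kernel-verified Lean document; each statement's English description precedes it below -/
import Mathlib

section
/- Let Γ be a finite nonempty subset of ℤⁿ (a set of characters of a torus G = (𝔾_m)ⁿ), let L_Γ be the subgroup of ℤⁿ generated by Γ, let V_Γ = L_Γ ⊗ ℝ ⊆ ℝⁿ, and let conv(Γ) be the convex hull of Γ in ℝⁿ. Then the following are equivalent: (i) 0 is an interior point of conv(Γ) regarded as a subset of V_Γ; (ii) for every λ ∈ ℤⁿ (viewed via the standard pairing ⟨λ,χ⟩), either ⟨λ,χ⟩ = 0 for all χ ∈ Γ, or there exist χ₁, χ₂ ∈ Γ with ⟨λ,χ₁⟩ > 0 and ⟨λ,χ₂⟩ < 0. -/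
/-
(i) ⇒ (ii): if `0` is interior to `conv Γ` in `V_Γ`, a small negative multiple of each `χ ∈ Γ`
lies in `conv Γ`, so a functional that is nonnegative on `Γ` vanishes on `Γ`.

(ii) ⇒ (i): clearing denominators, (ii) also holds for rational functionals, and Farkas' lemma
over `ℚ` (in Stiemke's form) gives strictly positive weights `c` with `∑ c_χ χ = 0`. Working
over `ℚ` rather than `ℝ` is what lets the separating functional be made integral. The
combinations `∑ a_χ χ` with all `a_χ > 0` and `∑ a_χ < 1` are the image of an open set under the
surjection `ℝ^Γ → V_Γ`, contain `0`, and lie in `conv Γ` once a multiple of `∑ c_χ χ` is added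
to bring the total weight to `1`.
-/

open Finset Matrix

theorem exists_nonneg_sum_insert_smul_eq {F ι M : Type*} [Semiring F] [PartialOrder F]
    [AddCommMonoid M] [Module F M] [DecidableEq ι] {s : Finset ι} {a : ι} (ha : a ∉ s)
    (v : ι → M) {c : ι → F} (hc : ∀ i ∈ s, 0 ≤ c i) {q : F} (hq : 0 ≤ q) :
    ∃ c' : ι → F, (∀ i ∈ insert a s, 0 ≤ c' i) ∧
      ∑ i ∈ insert a s, c' i • v i = q • v a + ∑ i ∈ s, c i • v i := by
  have hupd : ∀ i ∈ s, Function.update c a q i = c i := fun i hi =>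
    Function.update_of_ne (ne_of_mem_of_not_mem hi ha) _ _
  refine ⟨Function.update c a q, forall_mem_insert _ _ _ |>.mpr ⟨by simpa, ?_⟩, ?_⟩
  · exact fun i hi => hupd i hi ▸ hc i hi
  · rw [sum_insert ha, Function.update_self]
    exact congrArg _ (sum_congr rfl fun i hi => by rw [hupd i hi])

section Farkas

variable {F ι m : Type*} [Field F] [LinearOrder F] [IsStrictOrderedRing F] [Fintype m]

theorem farkas_alternative [DecidableEq ι] (s : Finset ι) (v : ι → m → F) (b : m → F) :
    (∃ c : ι → F, (∀ i ∈ s, 0 ≤ c i) ∧ ∑ i ∈ s, c i • v i = b) ∨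
      ∃ l : m → F, (∀ i ∈ s, 0 ≤ l ⬝ᵥ v i) ∧ l ⬝ᵥ b < 0 := by
  induction s using Finset.induction_on generalizing v b with
  | empty =>
    by_cases hb : b = 0
    · exact .inl ⟨0, by simp, by simp [hb]⟩
    · refine .inr ⟨-b, by simp, ?_⟩
      have : 0 < b ⬝ᵥ b :=
        lt_of_le_of_ne (Finset.sum_nonneg fun i _ => mul_self_nonneg (b i))
          (Ne.symm (dotProduct_self_eq_zero.not.mpr hb))
      simpa
  | insert a s ha ih =>
    obtain ⟨c, hc, hcb⟩ | ⟨l, hl, hlb⟩ := ih v b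
    · obtain ⟨c', hc', hc'b⟩ := exists_nonneg_sum_insert_smul_eq ha v hc le_rfl
      exact .inl ⟨c', hc', by simp [hc'b, hcb]⟩
    by_cases hla : 0 ≤ l ⬝ᵥ v a
    · exact .inr ⟨l, forall_mem_insert _ _ _ |>.mpr ⟨hla, hl⟩, hlb⟩
    push Not at hla
    -- project along `v a` onto the hyperplane `l = 0`, and recurse
    set d := l ⬝ᵥ v a
    let P : (m → F) → m → F := fun x => d • x - (l ⬝ᵥ x) • v a
    obtain ⟨c, hc, hcb⟩ | ⟨μ, hμ, hμb⟩ := ih (P ∘ v) (P b)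
    · set q := (l ⬝ᵥ b - ∑ i ∈ s, c i * l ⬝ᵥ v i) / d
      have hq : 0 < q := div_pos_of_neg_of_neg (by
        have := Finset.sum_nonneg fun i hi => mul_nonneg (hc i hi) (hl i hi)
        linarith) hla
      obtain ⟨c', hc', hc'b⟩ := exists_nonneg_sum_insert_smul_eq ha v hc hq.le
      refine .inl ⟨c', hc', ?_⟩
      have hcb' : d • ∑ i ∈ s, c i • v i - (∑ i ∈ s, c i * l ⬝ᵥ v i) • v a =
          d • b - (l ⬝ᵥ b) • v a := by
        rw [show d • b - (l ⬝ᵥ b) • v a = P b from rfl, ← hcb]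
        simp only [P, Function.comp_apply, smul_sub, sum_sub_distrib, smul_sum, sum_smul,
          smul_smul, mul_comm]
      apply smul_right_injective _ hla.ne
      simp only [hc'b, smul_add, smul_smul, q, mul_div_cancel₀ _ hla.ne]
      linear_combination (norm := module) hcb'
    · have key : ∀ x, (d • μ - (μ ⬝ᵥ v a) • l) ⬝ᵥ x = μ ⬝ᵥ P x := by
        intro x
        simp only [P, sub_dotProduct, dotProduct_sub, smul_dotProduct, dotProduct_smul,
          smul_eq_mul]
        ring
      refine .inr ⟨d • μ - (μ ⬝ᵥ v a) • l, forall_mem_insert _ _ _ |>.mpr ⟨?_, ?_⟩, ?_⟩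
      · simp [key, P, d]
      · exact fun i hi => (key _).symm ▸ hμ i hi
      · exact (key _).symm ▸ hμb

theorem exists_pos_sum_smul_eq_zero [DecidableEq ι] (s : Finset ι) (v : ι → m → F)
    (h : ∀ l : m → F, (∀ i ∈ s, 0 ≤ l ⬝ᵥ v i) → ∀ i ∈ s, l ⬝ᵥ v i = 0) :
    ∃ c : ι → F, (∀ i ∈ s, 0 < c i) ∧ ∑ i ∈ s, c i • v i = 0 := by
  obtain ⟨c, hc, hcv⟩ | ⟨l, hl, hlb⟩ := farkas_alternative s v (-∑ i ∈ s, v i)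
  · refine ⟨c + 1, fun i hi => by simpa using add_pos_of_nonneg_of_pos (hc i hi) one_pos, ?_⟩
    simp [add_smul, sum_add_distrib, hcv]
  · rw [dotProduct_neg, dotProduct_sum, sum_eq_zero (h l hl)] at hlb
    simp at hlb

end Farkas

theorem forall_rat_dotProduct_eq_zero_of_forall_int {m : Type*} [Fintype m]
    (s : Finset (m → ℤ)) (h : ∀ l : m → ℤ, (∀ x ∈ s, 0 ≤ l ⬝ᵥ x) → ∀ x ∈ s, l ⬝ᵥ x = 0)
    (l : m → ℚ) (hl : ∀ x ∈ s, 0 ≤ l ⬝ᵥ fun j => (x j : ℚ)) :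
    ∀ x ∈ s, (l ⬝ᵥ fun j => (x j : ℚ)) = 0 := by
  obtain ⟨⟨b, hb⟩, hbl⟩ := IsLocalization.exist_integer_multiples_of_finite (nonZeroDivisors ℤ) l
  choose z hz using hbl
  have hb0 : (0 : ℚ) < b * b := by
    exact_mod_cast mul_self_pos.mpr (nonZeroDivisors.ne_zero hb)
  -- `b • l` is integral; scaling once more by `b` makes the factor `b * b` positive
  have hscale : ∀ x : m → ℤ,
      (((b • z) ⬝ᵥ x : ℤ) : ℚ) = (b * b) * (l ⬝ᵥ fun j => (x j : ℚ)) := by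
    intro x
    simp only [dotProduct, Int.cast_sum, Int.cast_mul, Pi.smul_apply, smul_eq_mul, mul_sum]
    refine sum_congr rfl fun j _ => ?_
    have := hz j
    simp only [algebraMap_int_eq, eq_intCast, zsmul_eq_mul] at this
    rw [this]; ring
  intro x hx
  have hzero := h (b • z) (fun y hy => ?_) x hx
  · rw [← Int.cast_eq_zero (α := ℚ), hscale] at hzero
    exact (mul_eq_zero.mp hzero).resolve_left hb0.ne'
  · have := mul_nonneg hb0.le (hl y hy)
    rw [← hscale] at this
    exact_mod_cast this

theorem forall_eq_zero_or_pos_and_neg_iff {R m : Type*} [CommRing R] [LinearOrder R]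
    [IsStrictOrderedRing R] [Fintype m] (s : Finset (m → R)) :
    (∀ l : m → R, (∀ x ∈ s, l ⬝ᵥ x = 0) ∨
        ((∃ x ∈ s, 0 < l ⬝ᵥ x) ∧ ∃ x ∈ s, l ⬝ᵥ x < 0)) ↔
      ∀ l : m → R, (∀ x ∈ s, 0 ≤ l ⬝ᵥ x) → ∀ x ∈ s, l ⬝ᵥ x = 0 := by
  refine ⟨fun h l hl => ?_, fun h l => ?_⟩
  · rcases h l with hzero | ⟨-, x, hx, hneg⟩
    · exact hzero
    · exact absurd (hl x hx) hneg.not_ge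
  by_cases hneg : ∃ x ∈ s, l ⬝ᵥ x < 0
  · by_cases hpos : ∃ x ∈ s, 0 < l ⬝ᵥ x
    · exact .inr ⟨hpos, hneg⟩
    push Not at hpos
    have := h (-l) fun x hx => by simpa using hpos x hx
    exact .inl fun x hx => by simpa using this x hx
  · push Not at hneg
    exact .inl (h l hneg)

open Submodule in
theorem eq_zero_of_nonneg_of_zero_mem_interior_convexHull {E : Type*} [AddCommGroup E]
    [Module ℝ E] [TopologicalSpace E] [ContinuousSMul ℝ E] {S : Set E}
    (h0 : (0 : span ℝ S) ∈ interior ((↑) ⁻¹' convexHull ℝ S)) (f : E →ₗ[ℝ] ℝ)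
    (hf : ∀ x ∈ S, 0 ≤ f x) {x : E} (hx : x ∈ S) : f x = 0 := by
  have hsmul : Filter.Tendsto (fun t : ℝ => t • (⟨x, subset_span hx⟩ : span ℝ S))
      (nhdsWithin 0 (Set.Iio 0)) (nhds 0) := by
    refine tendsto_nhdsWithin_of_tendsto_nhds ?_
    simpa using (Filter.tendsto_id (x := nhds (0 : ℝ))).smul_const
      (⟨x, subset_span hx⟩ : span ℝ S)
  obtain ⟨t, ht, ht0⟩ :=
    ((hsmul.eventually (mem_interior_iff_mem_nhds.mp h0)).and self_mem_nhdsWithin).exists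
  have hconv : convexHull ℝ S ⊆ {y | 0 ≤ f y} :=
    convexHull_min hf (convex_halfSpace_ge f.isLinear 0)
  have : 0 ≤ t * f x := by simpa using hconv ht
  linarith [hf x hx, nonpos_of_mul_nonneg_right this ht0]

theorem sum_smul_mem_convexHull_of_sum_smul_eq_zero {ι E : Type*} [Fintype ι] [AddCommGroup E]
    [Module ℝ E] (v : ι → E) {c : ι → ℝ} (hc : ∀ i, 0 ≤ c i) (hc_sum : 0 < ∑ i, c i)
    (hcv : ∑ i, c i • v i = 0) {a : ι → ℝ} (ha : ∀ i, 0 ≤ a i) (ha_sum : ∑ i, a i ≤ 1) :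
    ∑ i, a i • v i ∈ convexHull ℝ (Set.range v) := by
  -- adding a multiple of the null combination `c` brings the total weight up to `1`
  set t := (1 - ∑ i, a i) / ∑ i, c i
  have ht : 0 ≤ t := div_nonneg (by linarith) hc_sum.le
  have hw : ∑ i, (a i + t * c i) = 1 := by
    rw [sum_add_distrib, ← mul_sum, div_mul_cancel₀ _ hc_sum.ne']
    ring
  have hmem := (convex_convexHull ℝ (Set.range v)).sum_mem
    (fun i _ => add_nonneg (ha i) (mul_nonneg ht (hc i))) hw
    (fun i _ => subset_convexHull ℝ _ (Set.mem_range_self i))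
  simpa [add_smul, sum_add_distrib, mul_smul, ← smul_sum, hcv] using hmem

open Submodule in
theorem zero_mem_interior_convexHull_of_sum_smul_eq_zero {ι E : Type*} [Fintype ι] [Nonempty ι]
    [AddCommGroup E] [Module ℝ E] [TopologicalSpace E] [IsTopologicalAddGroup E]
    [ContinuousSMul ℝ E] [T2Space E] (v : ι → E) {c : ι → ℝ} (hc : ∀ i, 0 < c i)
    (hcv : ∑ i, c i • v i = 0) :
    (0 : span ℝ (Set.range v)) ∈ interior ((↑) ⁻¹' convexHull ℝ (Set.range v)) := by
  have := FiniteDimensional.span_of_finite ℝ (Set.finite_range v)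
  let T : (ι → ℝ) →ₗ[ℝ] span ℝ (Set.range v) :=
    (Fintype.linearCombination ℝ v).codRestrict _ fun a => by
      rw [← Fintype.range_linearCombination]
      exact LinearMap.mem_range_self _ a
  have hT : Function.Surjective T := by
    rintro ⟨y, hy⟩
    rw [← Fintype.range_linearCombination] at hy
    obtain ⟨a, rfl⟩ := hy
    exact ⟨a, rfl⟩
  let U : Set (ι → ℝ) := Set.univ.pi (fun _ => Set.Ioi 0) ∩ {a | ∑ i, a i < 1}
  have hU : IsOpen U :=
    (isOpen_set_pi Set.finite_univ fun _ _ => isOpen_Ioi).inter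
      (isOpen_lt (by fun_prop) continuous_const)
  have hc_sum : 0 < ∑ i, c i := sum_pos (fun i _ => hc i) univ_nonempty
  have hTU : T '' U ⊆ (↑) ⁻¹' convexHull ℝ (Set.range v) := by
    rintro _ ⟨a, ⟨ha, ha_sum⟩, rfl⟩
    rw [Set.mem_univ_pi] at ha
    simpa [T, Fintype.linearCombination_apply] using
      sum_smul_mem_convexHull_of_sum_smul_eq_zero v (fun i => (hc i).le) hc_sum hcv
        (fun i => (ha i).le) ha_sum.le
  have ha₀ : (2 * ∑ i, c i)⁻¹ • c ∈ U := by
    refine ⟨Set.mem_univ_pi.mpr fun i => mul_pos (inv_pos.mpr (by linarith)) (hc i), ?_⟩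
    change ∑ i, (2 * ∑ i, c i)⁻¹ * c i < 1
    rw [← mul_sum, inv_mul_lt_one₀ (by linarith)]
    linarith
  have hTa₀ : T ((2 * ∑ i, c i)⁻¹ • c) = 0 := by
    ext1
    simp [T, Fintype.linearCombination_apply, mul_smul, hcv]
  exact interior_maximal hTU (LinearMap.isOpenMap_of_finiteDimensional T hT U hU)
    ⟨_, ha₀, hTa₀⟩

theorem stmt3 (n : ℕ) (Γ : Finset (Fin n → ℤ)) (hΓ : Γ.Nonempty) :
    ((0 : Submodule.span ℝ ((fun χ : Fin n → ℤ => fun i => (χ i : ℝ)) '' (Γ : Set (Fin n → ℤ)))) ∈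
        interior {v : Submodule.span ℝ
            ((fun χ : Fin n → ℤ => fun i => (χ i : ℝ)) '' (Γ : Set (Fin n → ℤ))) |
          (v : Fin n → ℝ) ∈
            convexHull ℝ ((fun χ : Fin n → ℤ => fun i => (χ i : ℝ)) '' (Γ : Set (Fin n → ℤ)))}) ↔
      ∀ l : Fin n → ℤ,
        (∀ χ ∈ Γ, ∑ i, l i * χ i = 0) ∨
          ((∃ χ₁ ∈ Γ, 0 < ∑ i, l i * χ₁ i) ∧ (∃ χ₂ ∈ Γ, ∑ i, l i * χ₂ i < 0)) := by
  refine Iff.trans ?_ (forall_eq_zero_or_pos_and_neg_iff Γ).symm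
  rw [Set.image_eq_range]
  constructor
  · intro h0 l hl χ hχ
    have := eq_zero_of_nonneg_of_zero_mem_interior_convexHull h0
      (dotProductBilin ℝ ℝ (fun i => (l i : ℝ))) (by
        rintro _ ⟨χ, rfl⟩
        simp only [dotProductBilin_apply_apply, dotProduct]
        exact_mod_cast hl χ χ.2) ⟨⟨χ, hχ⟩, rfl⟩
    simp only [dotProductBilin_apply_apply, dotProduct] at this
    exact_mod_cast this
  · intro h
    obtain ⟨c, hc, hcv⟩ := exists_pos_sum_smul_eq_zero Γ (fun χ j => (χ j : ℚ))
      (forall_rat_dotProduct_eq_zero_of_forall_int Γ h)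
    have : Nonempty Γ := hΓ.to_subtype
    refine zero_mem_interior_convexHull_of_sum_smul_eq_zero _ (c := fun χ => (c χ : ℝ))
      (fun χ => by exact_mod_cast hc χ χ.2) ?_
    ext j
    have := congrArg (fun w => ((w j : ℚ) : ℝ)) hcv
    simpa [Finset.sum_apply, ← Finset.sum_coe_sort Γ] using this
end

section
/- Let G be a reductive group acting on a scheme X with a fixed maximal torus T, and suppose the Hilbert–Mumford criterion holds: x is semistable for a linearization L with respect to a subgroup H if and only if μ^L(x,λ) ≥ 0 for all nontrivial one-parameter subgroups λ of H. Then the G-semistable locus satisfies X^{ss}_G(L) = ∩_{g∈G} g⁻¹ · X^{ss}_T(L). Consequently, if only finitely many subsets of X can occur as X^{ss}_T(L') as L' ranges over G-linearized ample line bundles, then only finitely many subsets can occur as X^{ss}_G(L'). -/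
/-! Since the weight is invariant under the simultaneous action, `μ(x, λ) = μ(g • x, g • λ)`, and
every nontrivial one-parameter subgroup is conjugate into the torus, testing all nontrivial `λ`
at `x` amounts to testing the torus ones at every translate `g • x`. In particular the
`G`-semistable locus is a function of the `T`-semistable locus, so finitely many `T`-loci give
finitely many `G`-loci. -/

section HilbertMumford

variable {G X Λ : Type*} [Group G] [MulAction G X] [MulAction G Λ]

lemma smul_ne_of_ne_fixedPoint {zero : Λ} (hzero : ∀ g : G, g • zero = zero) {l : Λ}
    (hl : l ≠ zero) (g : G) : g • l ≠ zero := by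
  rwa [Ne, smul_eq_iff_eq_inv_smul, hzero]

lemma forall_weight_nonneg_iff_forall_smul {zero : Λ} (hzero : ∀ g : G, g • zero = zero)
    {T : Set Λ} (hT : ∀ l : Λ, l ≠ zero → ∃ g : G, g • l ∈ T) {μ : X → Λ → EReal}
    (hequiv : ∀ (x : X) (g : G) (l : Λ), μ (g • x) (g • l) = μ x l) (x : X) :
    (∀ l : Λ, l ≠ zero → 0 ≤ μ x l) ↔ ∀ g : G, ∀ l ∈ T, l ≠ zero → 0 ≤ μ (g • x) l := by
  constructor
  · intro h g l _ hl
    have hweight : μ (g • x) l = μ x (g⁻¹ • l) := by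
      rw [← hequiv x g, smul_inv_smul]
    exact hweight ▸ h _ (smul_ne_of_ne_fixedPoint hzero hl g⁻¹)
  · intro h l hl
    obtain ⟨g, hgl⟩ := hT l hl
    exact hequiv x g l ▸ h g _ hgl (smul_ne_of_ne_fixedPoint hzero hl g)

end HilbertMumford

theorem stmt9 {G X Λ ι : Type*} [Group G] [MulAction G X] [MulAction G Λ]
    (zero : Λ) (hzero : ∀ g : G, g • zero = zero)
    (T : Set Λ) (hT : ∀ l : Λ, l ≠ zero → ∃ g : G, g • l ∈ T)
    (μ : ι → X → Λ → EReal)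
    (hequiv : ∀ (i : ι) (x : X) (g : G) (l : Λ), μ i (g • x) (g • l) = μ i x l)
    (SSG SST : ι → Set X)
    (hHMG : ∀ i x, x ∈ SSG i ↔ ∀ l : Λ, l ≠ zero → 0 ≤ μ i x l)
    (hHMT : ∀ i x, x ∈ SST i ↔ ∀ l ∈ T, l ≠ zero → 0 ≤ μ i x l) :
    (∀ i, SSG i = ⋂ g : G, (fun x => g • x) ⁻¹' SST i) ∧
    ((Set.range SST).Finite → (Set.range SSG).Finite) := by
  have hlocus : ∀ i, SSG i = ⋂ g : G, (fun x => g • x) ⁻¹' SST i := fun i => by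
    ext x
    simp only [Set.mem_iInter, Set.mem_preimage, hHMG, hHMT]
    exact forall_weight_nonneg_iff_forall_smul hzero hT (hequiv i) x
  refine ⟨hlocus, fun hfin => ?_⟩
  rw [show SSG = (fun S => ⋂ g : G, (fun x => g • x) ⁻¹' S) ∘ SST from funext hlocus,
    Set.range_comp]
  exact hfin.image _
end

section
/- Let A = ⊕_{χ∈X*(G)} A_χ be an X*(G)-graded ring (coming from a torus action on Spec A) and V = ⊕_{χ} V_χ a compatibly graded A-module generated by homogeneous elements v₁,…,v_n with v_i ∈ V_{χ_i}. Fix a point x with evaluation maps [x]_χ : V_χ → k and [f(x)]_χ : A_χ → k, and let Γ_{f(x)} = {χ : [f(x)]_χ ≠ 0}, Γ_x = {χ : [x]_χ ≠ 0}. Assume [x]_{χ_i}(v_i) ≠ 0 exactly for 1 ≤ i ≤ k. Then Γ_x = ∪_{i=1}^{k} (χ_i + Γ_{f(x)}). -/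
/-! Every homogeneous element of `V` of weight `χ` is a sum of terms `a i • vgen i` with
`a i` of weight `χ - χw i`, and `[x]` evaluates such a term to `[f(x)](a i) · [x](vgen i)`.
So `[x]_χ ≠ 0` forces some term with both factors nonzero, i.e. `χ ∈ χw i + Γ_{f(x)}` with
`i < K`; conversely `a • vgen i` witnesses every such weight. -/

theorem exists_apply_ne_zero_of_apply_sum_ne_zero {ι M R : Type*} [AddCommMonoid M]
    [AddCommMonoid R] (f : M → R) (hadd : ∀ u u', f (u + u') = f u + f u') (hzero : f 0 = 0)
    {s : Finset ι} {u : ι → M} (h : f (∑ i ∈ s, u i) ≠ 0) : ∃ i ∈ s, f (u i) ≠ 0 := by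
  let F : M →+ R := ⟨⟨f, hzero⟩, hadd⟩
  exact Finset.exists_ne_zero_of_sum_ne_zero (map_sum F u s ▸ h)

theorem stmt15 {Λ k : Type*} [AddCommGroup Λ] [Field k]
    (A V : Λ → Type*) [∀ χ, AddCommMonoid (V χ)]
    (smul : ∀ {χ χ' : Λ}, A χ → V χ' → V (χ + χ'))
    (tr : ∀ {χ χ' : Λ}, χ = χ' → V χ → V χ')
    (evA : ∀ χ, A χ → k) (evV : ∀ χ, V χ → k)
    (htr : ∀ {χ χ' : Λ} (h : χ = χ') (v : V χ), evV χ' (tr h v) = evV χ v)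
    (hevV_add : ∀ (χ : Λ) (u u' : V χ), evV χ (u + u') = evV χ u + evV χ u')
    (hevV_zero : ∀ χ : Λ, evV χ (0 : V χ) = 0)
    (hmul : ∀ {χ χ' : Λ} (a : A χ) (v : V χ'),
      evV (χ + χ') (smul a v) = evA χ a * evV χ' v)
    (N : ℕ) (χw : Fin N → Λ) (vgen : ∀ i, V (χw i))
    (hgen : ∀ (χ : Λ) (v : V χ), ∃ a : ∀ i, A (χ - χw i),
      v = ∑ i, tr (sub_add_cancel χ (χw i)) (smul (a i) (vgen i)))
    (K : ℕ) (hsupp : ∀ i : Fin N, evV (χw i) (vgen i) ≠ 0 ↔ (i : ℕ) < K) :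
    {χ : Λ | ∃ v : V χ, evV χ v ≠ 0} =
      ⋃ i ∈ {i : Fin N | (i : ℕ) < K},
        {χ : Λ | ∃ χ' : Λ, (∃ a : A χ', evA χ' a ≠ 0) ∧ χ = χw i + χ'} := by
  ext χ
  simp only [Set.mem_ofPred_eq, Set.mem_iUnion]
  constructor
  · rintro ⟨v, hv⟩
    obtain ⟨a, rfl⟩ := hgen χ v
    obtain ⟨i, -, hi⟩ :=
      exists_apply_ne_zero_of_apply_sum_ne_zero (evV χ) (hevV_add χ) (hevV_zero χ) hv
    rw [htr, hmul, mul_ne_zero_iff] at hi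
    exact ⟨i, (hsupp i).mp hi.2, χ - χw i, ⟨a i, hi.1⟩, (add_sub_cancel _ _).symm⟩
  · rintro ⟨i, hi, χ', ⟨a, ha⟩, rfl⟩
    refine ⟨tr (add_comm χ' (χw i)) (smul a (vgen i)), ?_⟩
    rw [htr, hmul]
    exact mul_ne_zero ha ((hsupp i).mpr hi)
end
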